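/- arXiv:0707.3687 — 2 statements merged into one kernel-verified Lean document; each statement's English description precedes it below -/
import Mathlib

section
/- Let p₀ ∈ U and let λ ∈ ℝ⁴ be a nonzero lightlike vector. Then the Lorentzian lightcone height function h_λ satisfies (∂h_λ/∂x)(p₀) = (∂h_λ/∂y)(p₀) = 0 if and only if λ is a nonzero real scalar multiple of (e₁+e₂)(p₀) or of (e₁−e₂)(p₀); in particular, if moreover λ₁² + λ₂² = 1, this holds if and only if λ = ±LG^+(p₀) or λ = ±LG^−(p₀). -/
noncomputable section

def pprod (x y : Fin 4 → ℝ) : ℝ :=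
  -(x 0 * y 0) - x 1 * y 1 + x 2 * y 2 + x 3 * y 3

def pdx (f : ℝ × ℝ → ℝ) (p : ℝ × ℝ) : ℝ := fderiv ℝ f p (1, 0)
def pdy (f : ℝ × ℝ → ℝ) (p : ℝ × ℝ) : ℝ := fderiv ℝ f p (0, 1)

def Dx (X : ℝ × ℝ → Fin 4 → ℝ) (p : ℝ × ℝ) : Fin 4 → ℝ := fderiv ℝ X p (1, 0)
def Dy (X : ℝ × ℝ → Fin 4 → ℝ) (p : ℝ × ℝ) : Fin 4 → ℝ := fderiv ℝ X p (0, 1)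
def Dxx (X : ℝ × ℝ → Fin 4 → ℝ) (p : ℝ × ℝ) : Fin 4 → ℝ := Dx (Dx X) p
def Dxy (X : ℝ × ℝ → Fin 4 → ℝ) (p : ℝ × ℝ) : Fin 4 → ℝ := Dy (Dx X) p
def Dyy (X : ℝ × ℝ → Fin 4 → ℝ) (p : ℝ × ℝ) : Fin 4 → ℝ := Dy (Dy X) p

def detHess (f : ℝ × ℝ → ℝ) (p : ℝ × ℝ) : ℝ :=
  pdx (pdx f) p * pdy (pdy f) p - (pdy (pdx f) p) ^ 2

def IsLorentzSurface (U : Set (ℝ × ℝ)) (X : ℝ × ℝ → Fin 4 → ℝ) : Prop :=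
  IsOpen U ∧ ContDiffOn ℝ (⊤ : ℕ∞) X U ∧
    ∀ p ∈ U,
      pprod (Dx X p) (Dx X p) * pprod (Dy X p) (Dy X p) - (pprod (Dx X p) (Dy X p)) ^ 2 < 0

def IsNormalFrame (U : Set (ℝ × ℝ)) (X e1 e2 : ℝ × ℝ → Fin 4 → ℝ) : Prop :=
  ContDiffOn ℝ (⊤ : ℕ∞) e1 U ∧ ContDiffOn ℝ (⊤ : ℕ∞) e2 U ∧
    ∀ p ∈ U,
      pprod (e1 p) (e1 p) = -1 ∧ pprod (e2 p) (e2 p) = 1 ∧ pprod (e1 p) (e2 p) = 0 ∧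
      pprod (e1 p) (Dx X p) = 0 ∧ pprod (e1 p) (Dy X p) = 0 ∧
      pprod (e2 p) (Dx X p) = 0 ∧ pprod (e2 p) (Dy X p) = 0

def xi (e1 e2 : ℝ × ℝ → Fin 4 → ℝ) (σ : ℝ) (p : ℝ × ℝ) : ℝ :=
  Real.sqrt ((e1 p 0 + σ * e2 p 0) ^ 2 + (e1 p 1 + σ * e2 p 1) ^ 2)

def LG (e1 e2 : ℝ × ℝ → Fin 4 → ℝ) (σ : ℝ) (p : ℝ × ℝ) : Fin 4 → ℝ :=
  (xi e1 e2 σ p)⁻¹ • (e1 p + σ • e2 p)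

def KlVanish (X e1 e2 : ℝ × ℝ → Fin 4 → ℝ) (σ : ℝ) (p : ℝ × ℝ) : Prop :=
  pprod (Dxx X p) (e1 p + σ • e2 p) * pprod (Dyy X p) (e1 p + σ • e2 p)
    - (pprod (Dxy X p) (e1 p + σ • e2 p)) ^ 2 = 0

set_option maxHeartbeats 2000000

private lemma detG (p q r : ℝ) :
    (!![p, r, 0, 0; r, q, 0, 0; 0, 0, -1, 0; 0, 0, 0, (1:ℝ)]).det = -(p*q - r^2) := by
  simp [Matrix.det_succ_row_zero, Fin.sum_univ_succ, Fin.succAbove]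
  ring

open Matrix in
private lemma auxKey (a b c d w : Fin 4 → ℝ)
    (hcc : pprod c c = -1) (hdd : pprod d d = 1) (hcd : pprod c d = 0)
    (hca : pprod c a = 0) (hcb : pprod c b = 0)
    (hda : pprod d a = 0) (hdb : pprod d b = 0)
    (hreg : pprod a a * pprod b b - (pprod a b)^2 < 0)
    (hwa : pprod a w = 0) (hwb : pprod b w = 0)
    (hwc : pprod c w = 0) (hwd : pprod d w = 0) : w = 0 := by
  simp only [pprod] at hcc hdd hcd hca hcb hda hdb hwa hwb hwc hwd hreg
  have hG : (!![a 0, a 1, a 2, a 3; b 0, b 1, b 2, b 3; c 0, c 1, c 2, c 3; d 0, d 1, d 2, d 3] *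
      !![(-1:ℝ),0,0,0; 0,-1,0,0; 0,0,1,0; 0,0,0,1] *
      (!![a 0, a 1, a 2, a 3; b 0, b 1, b 2, b 3; c 0, c 1, c 2, c 3; d 0, d 1, d 2, d 3])ᵀ) =
      !![-(a 0 * a 0) - a 1 * a 1 + a 2 * a 2 + a 3 * a 3,
         -(a 0 * b 0) - a 1 * b 1 + a 2 * b 2 + a 3 * b 3, 0, 0;
         -(a 0 * b 0) - a 1 * b 1 + a 2 * b 2 + a 3 * b 3,
         -(b 0 * b 0) - b 1 * b 1 + b 2 * b 2 + b 3 * b 3, 0, 0;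
         0, 0, -1, 0; 0, 0, 0, 1] := by
    ext i j
    fin_cases i <;> fin_cases j <;>
      simp [Matrix.mul_apply, Matrix.transpose_apply, Fin.sum_univ_four,
        Matrix.vecHead, Matrix.vecTail] <;>
      ring_nf <;> linarith
  have hdet2 : (!![a 0, a 1, a 2, a 3; b 0, b 1, b 2, b 3;
      c 0, c 1, c 2, c 3; d 0, d 1, d 2, d 3] : Matrix (Fin 4) (Fin 4) ℝ).det ^ 2 =
      -((-(a 0 * a 0) - a 1 * a 1 + a 2 * a 2 + a 3 * a 3) *
          (-(b 0 * b 0) - b 1 * b 1 + b 2 * b 2 + b 3 * b 3) -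
        (-(a 0 * b 0) - a 1 * b 1 + a 2 * b 2 + a 3 * b 3)^2) := by
    have h1 := congrArg Matrix.det hG
    rw [Matrix.det_mul, Matrix.det_mul, Matrix.det_transpose] at h1
    have hJ : (!![(-1:ℝ),0,0,0; 0,-1,0,0; 0,0,1,0; 0,0,0,1]).det = 1 := by
      simp [Matrix.det_succ_row_zero, Fin.sum_univ_succ, Fin.succAbove]
    rw [hJ, detG] at h1
    rw [← h1]; ring
  have hdet : (!![a 0, a 1, a 2, a 3; b 0, b 1, b 2, b 3;
      c 0, c 1, c 2, c 3; d 0, d 1, d 2, d 3] : Matrix (Fin 4) (Fin 4) ℝ).det ≠ 0 := by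
    intro h
    rw [h] at hdet2
    simp at hdet2
    nlinarith
  have hMu : (!![a 0, a 1, a 2, a 3; b 0, b 1, b 2, b 3;
      c 0, c 1, c 2, c 3; d 0, d 1, d 2, d 3]).mulVec ![-w 0, -w 1, w 2, w 3] = 0 := by
    ext i
    fin_cases i <;>
      simp [Matrix.mulVec, dotProduct, Fin.sum_univ_four] <;> linarith
  have hu := Matrix.eq_zero_of_mulVec_eq_zero hdet hMu
  funext i
  fin_cases i
  · have := congrFun hu 0; simp at this ⊢; linarith
  · have := congrFun hu 1; simp at this ⊢; linarith
  · have := congrFun hu 2; simp at this ⊢; linarith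
  · have := congrFun hu 3; simp at this ⊢; linarith

private lemma auxDeriv (X : ℝ × ℝ → Fin 4 → ℝ) (lam : Fin 4 → ℝ) (p₀ : ℝ × ℝ)
    (hX : DifferentiableAt ℝ X p₀) :
    pdx (fun p => pprod (X p) lam) p₀ = pprod (Dx X p₀) lam ∧
    pdy (fun p => pprod (X p) lam) p₀ = pprod (Dy X p₀) lam := by
  set L : (Fin 4 → ℝ) →L[ℝ] ℝ :=
    lam 2 • (ContinuousLinearMap.proj 2 : (Fin 4 → ℝ) →L[ℝ] ℝ) +
    lam 3 • (ContinuousLinearMap.proj 3 : (Fin 4 → ℝ) →L[ℝ] ℝ) -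
    lam 0 • (ContinuousLinearMap.proj 0 : (Fin 4 → ℝ) →L[ℝ] ℝ) -
    lam 1 • (ContinuousLinearMap.proj 1 : (Fin 4 → ℝ) →L[ℝ] ℝ) with hL
  have hLapp : ∀ v : Fin 4 → ℝ, L v = pprod v lam := by
    intro v
    simp [hL, pprod]
    ring
  have heq : (fun p => pprod (X p) lam) = fun p => L (X p) := by
    funext p; rw [hLapp]
  have hfd : HasFDerivAt (fun p => L (X p)) (L.comp (fderiv ℝ X p₀)) p₀ :=
    L.hasFDerivAt.comp p₀ hX.hasFDerivAt
  constructor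
  · rw [pdx, heq, hfd.fderiv]
    simpa [Dx] using hLapp (fderiv ℝ X p₀ (1, 0))
  · rw [pdy, heq, hfd.fderiv]
    simpa [Dy] using hLapp (fderiv ℝ X p₀ (0, 1))

private lemma psymm (x y : Fin 4 → ℝ) : pprod x y = pprod y x := by
  simp only [pprod]; ring

private lemma pexp (x y c d : Fin 4 → ℝ) (α β : ℝ) :
    pprod x (y - (α • c + β • d)) = pprod x y - α * pprod x c - β * pprod x d := by
  simp only [pprod, Pi.sub_apply, Pi.add_apply, Pi.smul_apply, smul_eq_mul]; ring

private lemma pquad (c d : Fin 4 → ℝ) (α β : ℝ) :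
    pprod (α • c + β • d) (α • c + β • d) =
      α^2 * pprod c c + 2 * α * β * pprod c d + β^2 * pprod d d := by
  simp only [pprod, Pi.add_apply, Pi.smul_apply, smul_eq_mul]; ring

private lemma pprod_smul_add (r : ℝ) (x y z : Fin 4 → ℝ) :
    pprod z (r • (x + y)) = r * (pprod z x + pprod z y) := by
  simp only [pprod, Pi.add_apply, Pi.smul_apply, smul_eq_mul]; ring

private lemma pprod_smul_sub (r : ℝ) (x y z : Fin 4 → ℝ) :
    pprod z (r • (x - y)) = r * (pprod z x - pprod z y) := by
  simp only [pprod, Pi.sub_apply, Pi.smul_apply, smul_eq_mul]; ring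

theorem stmt0 (U : Set (ℝ × ℝ)) (X e1 e2 : ℝ × ℝ → Fin 4 → ℝ)
    (hsurf : IsLorentzSurface U X) (hframe : IsNormalFrame U X e1 e2)
    (p₀ : ℝ × ℝ) (hp₀ : p₀ ∈ U)
    (lam : Fin 4 → ℝ) (hlam : lam ≠ 0) (hlight : pprod lam lam = 0) :
    ((pdx (fun p => pprod (X p) lam) p₀ = 0 ∧ pdy (fun p => pprod (X p) lam) p₀ = 0) ↔
      (∃ μ : ℝ, μ ≠ 0 ∧
        (lam = μ • (e1 p₀ + e2 p₀) ∨ lam = μ • (e1 p₀ - e2 p₀)))) ∧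
    (lam 0 ^ 2 + lam 1 ^ 2 = 1 →
      ((pdx (fun p => pprod (X p) lam) p₀ = 0 ∧ pdy (fun p => pprod (X p) lam) p₀ = 0) ↔
        (lam = LG e1 e2 1 p₀ ∨ lam = -LG e1 e2 1 p₀ ∨
         lam = LG e1 e2 (-1) p₀ ∨ lam = -LG e1 e2 (-1) p₀))) := by
  obtain ⟨hU, hXc, hregU⟩ := hsurf
  obtain ⟨-, -, hfr⟩ := hframe
  obtain ⟨hcc, hdd, hcd, hca, hcb, hda, hdb⟩ := hfr p₀ hp₀
  have hreg := hregU p₀ hp₀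
  have hXd : DifferentiableAt ℝ X p₀ :=
    (hXc.contDiffAt (hU.mem_nhds hp₀)).differentiableAt (by simp)
  obtain ⟨hdx, hdy⟩ := auxDeriv X lam p₀ hXd
  have hac : pprod (Dx X p₀) (e1 p₀) = 0 := by rw [psymm]; exact hca
  have had : pprod (Dx X p₀) (e2 p₀) = 0 := by rw [psymm]; exact hda
  have hbc : pprod (Dy X p₀) (e1 p₀) = 0 := by rw [psymm]; exact hcb
  have hbd : pprod (Dy X p₀) (e2 p₀) = 0 := by rw [psymm]; exact hdb
  have main : (pdx (fun p => pprod (X p) lam) p₀ = 0 ∧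
      pdy (fun p => pprod (X p) lam) p₀ = 0) ↔
      (∃ μ : ℝ, μ ≠ 0 ∧ (lam = μ • (e1 p₀ + e2 p₀) ∨ lam = μ • (e1 p₀ - e2 p₀))) := by
    rw [hdx, hdy]
    constructor
    · rintro ⟨h1, h2⟩
      set α : ℝ := -pprod (e1 p₀) lam with hα
      set β : ℝ := pprod (e2 p₀) lam with hβ
      have hw : lam - (α • e1 p₀ + β • e2 p₀) = 0 := by
        apply auxKey (Dx X p₀) (Dy X p₀) (e1 p₀) (e2 p₀) _
          hcc hdd hcd hca hcb hda hdb hreg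
        · rw [pexp, h1, hac, had]; ring
        · rw [pexp, h2, hbc, hbd]; ring
        · rw [pexp, hcc, hcd, hα]; ring
        · rw [pexp, hdd, psymm (e2 p₀) (e1 p₀), hcd, hβ]; ring
      have hlam_eq : lam = α • e1 p₀ + β • e2 p₀ := sub_eq_zero.mp hw
      have hl2 : -α^2 + β^2 = 0 := by
        rw [hlam_eq, pquad, hcc, hdd, hcd] at hlight
        linarith
      have hαne : α ≠ 0 := by
        intro h0
        have hβ0 : β = 0 := by nlinarith
        exact hlam (by rw [hlam_eq, h0, hβ0]; simp)
      have hfac : (β - α) * (β + α) = 0 := by linear_combination hl2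
      rcases mul_eq_zero.mp hfac with h | h
      · refine ⟨α, hαne, Or.inl ?_⟩
        have hβα : β = α := by linarith
        rw [hlam_eq]; funext i
        simp only [Pi.add_apply, Pi.smul_apply, smul_eq_mul]
        rw [hβα]; ring
      · refine ⟨α, hαne, Or.inr ?_⟩
        have hβα : β = -α := by linarith
        rw [hlam_eq]; funext i
        simp only [Pi.add_apply, Pi.sub_apply, Pi.smul_apply, smul_eq_mul]
        rw [hβα]; ring
    · rintro ⟨μ, hμ, h | h⟩
      · rw [h]
        constructor
        · rw [pprod_smul_add, hac, had]; ring
        · rw [pprod_smul_add, hbc, hbd]; ring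
      · rw [h]
        constructor
        · rw [pprod_smul_sub, hac, had]; ring
        · rw [pprod_smul_sub, hbc, hbd]; ring
  refine ⟨main, fun hnorm => ?_⟩
  rw [main]
  constructor
  · rintro ⟨μ, hμ, h | h⟩
    · have h0 := congrFun h 0
      have h1 := congrFun h 1
      simp only [Pi.smul_apply, Pi.add_apply, smul_eq_mul] at h0 h1
      have hs : μ^2 * ((e1 p₀ 0 + e2 p₀ 0)^2 + (e1 p₀ 1 + e2 p₀ 1)^2) = 1 := by
        rw [h0, h1] at hnorm; ring_nf at hnorm ⊢; linarith
      have hxi : xi e1 e2 1 p₀ = |μ|⁻¹ := by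
        rw [xi]
        have habs : (e1 p₀ 0 + 1 * e2 p₀ 0)^2 + (e1 p₀ 1 + 1 * e2 p₀ 1)^2 = (|μ|⁻¹)^2 := by
          rw [inv_pow, sq_abs]
          field_simp
          nlinarith [hs]
        rw [habs, Real.sqrt_sq (by positivity)]
      have hLG : LG e1 e2 1 p₀ = |μ| • (e1 p₀ + e2 p₀) := by
        rw [LG, hxi, inv_inv, one_smul]
      rcases lt_or_gt_of_ne hμ with hlt | hgt
      · exact Or.inr (Or.inl (by rw [h, hLG, abs_of_neg hlt, neg_smul, neg_neg]))
      · exact Or.inl (by rw [h, hLG, abs_of_pos hgt])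
    · have h0 := congrFun h 0
      have h1 := congrFun h 1
      simp only [Pi.smul_apply, Pi.sub_apply, smul_eq_mul] at h0 h1
      have hs : μ^2 * ((e1 p₀ 0 - e2 p₀ 0)^2 + (e1 p₀ 1 - e2 p₀ 1)^2) = 1 := by
        rw [h0, h1] at hnorm; ring_nf at hnorm ⊢; linarith
      have hxi : xi e1 e2 (-1) p₀ = |μ|⁻¹ := by
        rw [xi]
        have habs : (e1 p₀ 0 + (-1) * e2 p₀ 0)^2 + (e1 p₀ 1 + (-1) * e2 p₀ 1)^2
            = (|μ|⁻¹)^2 := by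
          rw [inv_pow, sq_abs]
          field_simp
          nlinarith [hs]
        rw [habs, Real.sqrt_sq (by positivity)]
      have hLG : LG e1 e2 (-1) p₀ = |μ| • (e1 p₀ - e2 p₀) := by
        rw [LG, hxi, inv_inv, neg_one_smul, ← sub_eq_add_neg]
      rcases lt_or_gt_of_ne hμ with hlt | hgt
      · exact Or.inr (Or.inr (Or.inr
          (by rw [h, hLG, abs_of_neg hlt, neg_smul, neg_neg])))
      · exact Or.inr (Or.inr (Or.inl (by rw [h, hLG, abs_of_pos hgt])))
  · have hplus : e1 p₀ + (1:ℝ) • e2 p₀ = e1 p₀ + e2 p₀ := by rw [one_smul]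
    have hminus : e1 p₀ + (-1:ℝ) • e2 p₀ = e1 p₀ - e2 p₀ := by
      rw [neg_one_smul, ← sub_eq_add_neg]
    rintro (h | h | h | h)
    · have hx0 : xi e1 e2 1 p₀ ≠ 0 := by
        intro h0
        exact hlam (by rw [h, LG, h0]; simp)
      exact ⟨(xi e1 e2 1 p₀)⁻¹, inv_ne_zero hx0, Or.inl (by rw [h, LG, hplus])⟩
    · have hx0 : xi e1 e2 1 p₀ ≠ 0 := by
        intro h0
        exact hlam (by rw [h, LG, h0]; simp)
      exact ⟨-(xi e1 e2 1 p₀)⁻¹, neg_ne_zero.mpr (inv_ne_zero hx0),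
        Or.inl (by rw [h, LG, hplus, neg_smul])⟩
    · have hx0 : xi e1 e2 (-1) p₀ ≠ 0 := by
        intro h0
        exact hlam (by rw [h, LG, h0]; simp)
      exact ⟨(xi e1 e2 (-1) p₀)⁻¹, inv_ne_zero hx0, Or.inr (by rw [h, LG, hminus])⟩
    · have hx0 : xi e1 e2 (-1) p₀ ≠ 0 := by
        intro h0
        exact hlam (by rw [h, LG, h0]; simp)
      exact ⟨-(xi e1 e2 (-1) p₀)⁻¹, neg_ne_zero.mpr (inv_ne_zero hx0),
        Or.inr (by rw [h, LG, hminus, neg_smul])⟩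
end
end

section
/- Let p₀ ∈ U and let v₀ ∈ ℝ⁴ be a lightlike vector with v₀₁² + v₀₂² > 0. Then h̃_{v₀}(p₀) = 0, (∂h̃_{v₀}/∂x)(p₀) = 0 and (∂h̃_{v₀}/∂y)(p₀) = 0 hold simultaneously if and only if ṽ₀ is a nonzero scalar multiple of (e₁+e₂)(p₀) or of (e₁−e₂)(p₀), and ⟨X(p₀), ṽ₀⟩ = √(v₀₁² + v₀₂²). -/
noncomputable section

lemma aux_ker (u1 u2 f1 f2 : Fin 4 → ℝ)
    (hG : pprod u1 u1 * pprod u2 u2 - (pprod u1 u2) ^ 2 < 0)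
    (h11 : pprod f1 f1 = -1) (h22 : pprod f2 f2 = 1) (h12 : pprod f1 f2 = 0)
    (hx1 : pprod f1 u1 = 0) (hy1 : pprod f1 u2 = 0)
    (hx2 : pprod f2 u1 = 0) (hy2 : pprod f2 u2 = 0)
    (z : Fin 4 → ℝ)
    (hz1 : pprod z u1 = 0) (hz2 : pprod z u2 = 0)
    (hz3 : pprod z f1 = 0) (hz4 : pprod z f2 = 0) : z = 0 := by
  simp only [pprod] at h11 h22 h12 hx1 hy1 hx2 hy2 hz1 hz2 hz3 hz4
  set M : Matrix (Fin 4) (Fin 4) ℝ := Matrix.of ![u1, u2, f1, f2] with hM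
  set N : Matrix (Fin 4) (Fin 4) ℝ :=
    Matrix.of ![![-u1 0, -u1 1, u1 2, u1 3], ![-u2 0, -u2 1, u2 2, u2 3],
      ![-f1 0, -f1 1, f1 2, f1 3], ![-f2 0, -f2 1, f2 2, f2 3]] with hN
  have hGram : N * M.transpose =
      !![pprod u1 u1, pprod u1 u2, 0, 0;
         pprod u1 u2, pprod u2 u2, 0, 0;
         0, 0, -1, 0;
         0, 0, 0, 1] := by
    ext i j
    fin_cases i <;> fin_cases j <;>
      simp [hM, hN, Matrix.mul_apply, Fin.sum_univ_four, pprod, Matrix.transpose_apply, Matrix.vecHead, Matrix.vecTail, Function.comp, Matrix.cons_val_zero, Matrix.cons_val_one, Matrix.head_cons] <;>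
      first
        | ring1
        | linear_combination h11 | linear_combination h22 | linear_combination h12
        | linear_combination hx1 | linear_combination hy1
        | linear_combination hx2 | linear_combination hy2
  have hdetG : (!![pprod u1 u1, pprod u1 u2, 0, 0;
         pprod u1 u2, pprod u2 u2, 0, 0;
         0, 0, -1, 0;
         0, 0, 0, (1:ℝ)]).det = (pprod u1 u2)^2 - pprod u1 u1 * pprod u2 u2 := by
    simp [Matrix.det_succ_row_zero, Fin.sum_univ_succ, Fin.succAbove, Matrix.cons_val_zero, Matrix.cons_val_one, Matrix.head_cons, Matrix.vecHead, Matrix.vecTail, Matrix.cons_val_succ]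
    ring
  have hdetG' : (N * M.transpose).det ≠ 0 := by
    rw [hGram, hdetG]; nlinarith [hG]
  have hdetN : N.det ≠ 0 := by
    rw [Matrix.det_mul] at hdetG'
    exact left_ne_zero_of_mul hdetG'
  have hNz : N.mulVec z = 0 := by
    ext i
    fin_cases i <;>
      simp [hN, Matrix.mulVec, dotProduct, Fin.sum_univ_four] <;>
      first
        | linear_combination hz1 | linear_combination hz2
        | linear_combination hz3 | linear_combination hz4
  haveI : Invertible N := N.invertibleOfIsUnitDet (isUnit_iff_ne_zero.mpr hdetN)
  calc z = (⅟N * N).mulVec z := by rw [invOf_mul_self, Matrix.one_mulVec]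
    _ = (⅟N).mulVec (N.mulVec z) := by rw [Matrix.mulVec_mulVec]
    _ = 0 := by rw [hNz, Matrix.mulVec_zero]

set_option maxHeartbeats 2000000 in
theorem stmt10 (U : Set (ℝ × ℝ)) (X e1 e2 : ℝ × ℝ → Fin 4 → ℝ)
    (hsurf : IsLorentzSurface U X) (hframe : IsNormalFrame U X e1 e2)
    (p₀ : ℝ × ℝ) (hp₀ : p₀ ∈ U)
    (v₀ : Fin 4 → ℝ) (hv₀ : pprod v₀ v₀ = 0) (hv12 : v₀ 0 ^ 2 + v₀ 1 ^ 2 > 0)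
    (vt : Fin 4 → ℝ) (hvt : vt = (Real.sqrt (v₀ 0 ^ 2 + v₀ 1 ^ 2))⁻¹ • v₀)
    (ht : (ℝ × ℝ) → ℝ)
    (hht : ht = fun p => pprod (X p) vt - Real.sqrt (v₀ 0 ^ 2 + v₀ 1 ^ 2)) :
    (ht p₀ = 0 ∧ pdx ht p₀ = 0 ∧ pdy ht p₀ = 0) ↔
      ((∃ μ : ℝ, μ ≠ 0 ∧ (vt = μ • (e1 p₀ + e2 p₀) ∨ vt = μ • (e1 p₀ - e2 p₀))) ∧
        pprod (X p₀) vt = Real.sqrt (v₀ 0 ^ 2 + v₀ 1 ^ 2)) := by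
  obtain ⟨hUopen, hXsm, hineq⟩ := hsurf
  obtain ⟨-, -, hfr⟩ := hframe
  obtain ⟨h11, h22, h12, hx1, hy1, hx2, hy2⟩ := hfr p₀ hp₀
  have hG := hineq p₀ hp₀
  have h11' := h11; have h22' := h22; have h12' := h12
  have hx1' := hx1; have hy1' := hy1; have hx2' := hx2; have hy2' := hy2
  simp only [pprod] at h11' h22' h12' hx1' hy1' hx2' hy2'
  set s := Real.sqrt (v₀ 0 ^ 2 + v₀ 1 ^ 2) with hs
  have hspos : 0 < s := Real.sqrt_pos.mpr hv12
  have hvt0 : vt 0 = s⁻¹ * v₀ 0 := by rw [hvt]; simp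
  have hvt1 : vt 1 = s⁻¹ * v₀ 1 := by rw [hvt]; simp
  have hvtpos : 0 < vt 0 ^ 2 + vt 1 ^ 2 := by
    rw [hvt0, hvt1]
    have hs' : (0:ℝ) < s⁻¹ ^ 2 := by positivity
    nlinarith [mul_pos hs' hv12]
  have hvtnull : pprod vt vt = 0 := by
    rw [hvt]
    simp only [pprod, Pi.smul_apply, smul_eq_mul]
    simp only [pprod] at hv₀
    linear_combination (s⁻¹)^2 * hv₀
  have hXd : DifferentiableAt ℝ X p₀ :=
    (hXsm.contDiffAt (hUopen.mem_nhds hp₀)).differentiableAt (by simp)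
  set L : (Fin 4 → ℝ) →L[ℝ] ℝ :=
    (-(vt 0)) • (ContinuousLinearMap.proj 0 : (Fin 4 → ℝ) →L[ℝ] ℝ)
      + (-(vt 1)) • ContinuousLinearMap.proj 1 + vt 2 • ContinuousLinearMap.proj 2
      + vt 3 • ContinuousLinearMap.proj 3 with hL
  have hLapp : ∀ x : Fin 4 → ℝ, L x = pprod x vt := by
    intro x
    simp only [hL, ContinuousLinearMap.add_apply, ContinuousLinearMap.coe_smul',
      Pi.smul_apply, ContinuousLinearMap.proj_apply, smul_eq_mul, pprod]
    ring
  have hht2 : ht = fun p => L (X p) - s := by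
    funext p
    simp only [hht]
    rw [hLapp]
  have hD : HasFDerivAt ht ((L.comp (fderiv ℝ X p₀))) p₀ := by
    rw [hht2]
    exact (L.hasFDerivAt.comp p₀ hXd.hasFDerivAt).sub_const s
  have hpdx : pdx ht p₀ = pprod (Dx X p₀) vt := by
    unfold pdx
    rw [hD.fderiv]
    simp only [ContinuousLinearMap.comp_apply]
    exact hLapp _
  have hpdy : pdy ht p₀ = pprod (Dy X p₀) vt := by
    unfold pdy
    rw [hD.fderiv]
    simp only [ContinuousLinearMap.comp_apply]
    exact hLapp _
  have hhtval : ht p₀ = pprod (X p₀) vt - s := by simp only [hht]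
  rw [hhtval, hpdx, hpdy, sub_eq_zero]
  constructor
  · rintro ⟨hXv, hu1, hu2⟩
    have hu1' := hu1; have hu2' := hu2
    simp only [pprod] at hu1' hu2'
    set a : ℝ := -(pprod vt (e1 p₀)) with ha
    set b : ℝ := pprod vt (e2 p₀) with hb
    have ha' := ha; have hb' := hb
    simp only [pprod] at ha' hb'
    have hz0 : vt - a • e1 p₀ - b • e2 p₀ = 0 := by
      refine aux_ker (Dx X p₀) (Dy X p₀) (e1 p₀) (e2 p₀) hG h11 h22 h12 hx1 hy1 hx2 hy2 _ ?_ ?_ ?_ ?_ <;>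
        simp only [pprod, Pi.sub_apply, Pi.smul_apply, smul_eq_mul]
      · linear_combination hu1' - a * hx1' - b * hx2'
      · linear_combination hu2' - a * hy1' - b * hy2'
      · linear_combination ha' - a * h11' - b * h12'
      · linear_combination -hb' - a * h12' - b * h22'
    have hvab : vt = a • e1 p₀ + b • e2 p₀ := by
      rw [sub_sub] at hz0
      exact sub_eq_zero.mp hz0
    have hnull : b ^ 2 - a ^ 2 = 0 := by
      have h0 := hvtnull
      rw [hvab] at h0
      simp only [pprod, Pi.add_apply, Pi.smul_apply, smul_eq_mul] at h0
      linear_combination h0 - a^2 * h11' - 2*a*b * h12' - b^2 * h22'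
    have hane : a ≠ 0 := by
      intro h0a
      have hb0 : b = 0 := by
        have hb2 : b ^ 2 = 0 := by rw [h0a] at hnull; linarith
        exact pow_eq_zero_iff two_ne_zero |>.mp hb2
      have h0 := congrFun hvab 0
      have h1 := congrFun hvab 1
      rw [h0a, hb0] at h0 h1
      simp at h0 h1
      rw [h0, h1] at hvtpos
      norm_num at hvtpos
    rcases mul_eq_zero.mp (show (b - a) * (b + a) = 0 by linear_combination hnull) with hba | hba
    · refine ⟨⟨a, hane, Or.inl ?_⟩, hXv⟩
      rw [hvab, show b = a by linarith]
      module
    · refine ⟨⟨a, hane, Or.inr ?_⟩, hXv⟩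
      rw [hvab, show b = -a by linarith]
      module
  · rintro ⟨⟨μ, hμ, hcase⟩, hXv⟩
    refine ⟨hXv, ?_, ?_⟩ <;>
      rcases hcase with h | h <;> rw [h] <;>
      simp only [pprod, Pi.smul_apply, Pi.add_apply, Pi.sub_apply, smul_eq_mul]
    · linear_combination μ * hx1' + μ * hx2'
    · linear_combination μ * hx1' - μ * hx2'
    · linear_combination μ * hy1' + μ * hy2'
    · linear_combination μ * hy1' - μ * hy2'
end
end
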